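/- Let d ≥ 1, ℓ ∈ ℝ, λ ∈ ℝ^d with ⟨λ, e₁⟩ ≠ 0, and let Φ : ℝ₊ → ℝ and Ψ : ℝ₊ → ℝ^d be twice continuously differentiable with Φ'(0) = 0 and Ψ'(0) = −λ. Let x ∈ ℝ^d and let h : ℝ₊ → ℝ be continuously differentiable with h(0) = ℓ + ⟨λ, x⟩. Then the Volterra integral equation h = H(θ, x), i.e. h(τ) = ℓ − ∫₀^τ θ(s)⟨Ψ'(τ−s), e₁⟩ ds − Φ'(τ) − ⟨Ψ'(τ), x⟩ for all τ ≥ 0, has a unique continuous solution θ : ℝ₊ → ℝ (the calibrated Hull–White extension C(h, x)). -/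

import Mathlib

open Matrix Set

/-!
With `k = ⟨Ψ', e₁⟩` and `F = ℓ - h - Φ' - ⟨Ψ', x⟩` the equation is the Volterra equation of the
first kind `∫₀^τ θ(s) k(τ - s) ds = F(τ)`. Writing `k = k(0) + ∫₀ k'` and exchanging the order of
integration over the triangle `0 ≤ s ≤ u ≤ τ`, its left side is `∫₀^τ (k(0) θ + θ ∗ k')`; as
`F(0) = 0`, the equation is therefore equivalent to its derivative `k(0) θ + θ ∗ k' = F'`, an
equation of the second kind because `k(0) = -⟨λ, e₁⟩ ≠ 0`. That one is solved by the Neumann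
series, whose `n`-th term is bounded by `M (K τ)ⁿ / n!`, and its solution is unique by Grönwall's
inequality.
-/

open MeasureTheory intervalIntegral

theorem HasDerivWithinAt.dotProduct_const {ι : Type*} [Fintype ι] {f : ℝ → ι → ℝ} {f' : ι → ℝ}
    {s : Set ℝ} {t : ℝ} (hf : HasDerivWithinAt f f' s t) (v : ι → ℝ) :
    HasDerivWithinAt (fun u => f u ⬝ᵥ v) (f' ⬝ᵥ v) s t := by
  simpa only [dotProduct] using
    HasDerivWithinAt.fun_sum fun j _ => (hasDerivWithinAt_pi.1 hf j).mul_const (v j)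

theorem ContinuousOn.comp_max_continuous {f : ℝ → ℝ} {a : ℝ} (hf : ContinuousOn f (Ici a)) :
    Continuous fun t => f (max a t) :=
  hf.comp_continuous (continuous_const.max continuous_id) fun t => le_max_left a t

theorem eq_add_integral_of_hasDerivWithinAt_Ici {f f' : ℝ → ℝ}
    (hf : ∀ t ∈ Ici (0:ℝ), HasDerivWithinAt f (f' t) (Ici 0) t) (hf' : ContinuousOn f' (Ici 0))
    {t : ℝ} (ht : 0 ≤ t) : f t = f 0 + ∫ v in (0:ℝ)..t, f' (max 0 v) := by
  rw [integral_eq_sub_of_hasDeriv_right_of_le ht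
    (fun s hs => ((hf s hs.1).continuousWithinAt).mono Icc_subset_Ici_self)
    (fun s hs => by
      rw [max_eq_right hs.1.le]
      exact ((hf s hs.1.le).hasDerivAt (Ici_mem_nhds hs.1)).hasDerivWithinAt)
    (hf'.comp_max_continuous.intervalIntegrable _ _)]
  ring

theorem eqOn_zero_of_integral_eq_zero {φ : ℝ → ℝ} (hφ : Continuous φ)
    (h : ∀ τ ∈ Ici (0:ℝ), ∫ s in (0:ℝ)..τ, φ s = 0) : EqOn φ 0 (Ici 0) := by
  intro τ hτ
  have hφτ : HasDerivWithinAt (fun t => ∫ s in (0:ℝ)..t, φ s) (φ τ) (Ici 0) τ :=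
    (hφ.integral_hasStrictDerivAt 0 τ).hasDerivAt.hasDerivWithinAt
  have h0 : HasDerivWithinAt (fun t => ∫ s in (0:ℝ)..t, φ s) 0 (Ici 0) τ :=
    (hasDerivWithinAt_const τ _ 0).congr h (h τ hτ)
  exact (uniqueDiffOn_Ici 0 τ hτ).eq_deriv _ hφτ h0

theorem eqOn_zero_of_abs_le_mul_integral_abs {g : ℝ → ℝ} (hg : Continuous g) {C b : ℝ}
    (hb : ∀ τ ∈ Icc 0 b, |g τ| ≤ C * ∫ s in (0:ℝ)..τ, |g s|) : EqOn g 0 (Icc 0 b) := by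
  set G : ℝ → ℝ := fun t => ∫ s in (0:ℝ)..t, |g s|
  have hG : ∀ t, HasDerivAt G |g t| t := fun t =>
    (hg.abs.integral_hasStrictDerivAt 0 t).hasDerivAt
  have hG0 : EqOn G 0 (Icc 0 b) := eq_zero_of_abs_deriv_le_mul_abs_self_of_eq_zero_right
    (fun t _ => (hG t).continuousAt.continuousWithinAt) (fun t _ => (hG t).hasDerivWithinAt)
    integral_same fun t ht => by
      rw [Real.norm_eq_abs, abs_abs, Real.norm_eq_abs,
        abs_of_nonneg (integral_nonneg ht.1 fun _ _ => abs_nonneg _)]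
      exact hb t ⟨ht.1, ht.2.le⟩
  intro t ht
  have hGt : ∫ s in (0:ℝ)..t, |g s| = 0 := hG0 ht
  have := hb t ht
  rw [hGt, mul_zero] at this
  exact abs_nonpos_iff.1 this

theorem integral_integral_triangle_swap {f : ℝ → ℝ → ℝ} (hf : Continuous (Function.uncurry f))
    {τ : ℝ} (hτ : 0 ≤ τ) :
    ∫ s in (0:ℝ)..τ, ∫ u in s..τ, f s u = ∫ u in (0:ℝ)..τ, ∫ s in (0:ℝ)..u, f s u := by
  set g : ℝ → ℝ → ℝ := fun s u => {z : ℝ × ℝ | z.1 ≤ z.2}.indicator (Function.uncurry f) (s, u)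
  have hg : Integrable (Function.uncurry g)
      ((volume.restrict (Ioc 0 τ)).prod (volume.restrict (Ioc 0 τ))) := by
    rw [Measure.prod_restrict, ← Measure.volume_eq_prod]
    refine IntegrableOn.indicator ?_ (measurableSet_le measurable_fst measurable_snd)
    exact (hf.continuousOn.integrableOn_compact (isCompact_Icc.prod isCompact_Icc)).mono_set
      (prod_mono Ioc_subset_Icc_self Ioc_subset_Icc_self)
  have hleft : ∀ s ∈ Ioc (0:ℝ) τ, ∫ u in s..τ, f s u = ∫ u in Ioc 0 τ, g s u := by
    intro s hs
    have : (fun u => g s u) = (Ici s).indicator (f s) := by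
      ext u; simp [g, indicator_apply]
    have hset : Ioc 0 τ ∩ Ici s = Icc s τ := by
      ext u
      simp only [mem_inter_iff, mem_Ioc, mem_Ici, mem_Icc]
      exact ⟨fun ⟨⟨_, h⟩, h'⟩ => ⟨h', h⟩, fun ⟨h, h'⟩ => ⟨⟨hs.1.trans_le h, h'⟩, h⟩⟩
    rw [this, setIntegral_indicator measurableSet_Ici, hset, integral_Icc_eq_integral_Ioc,
      integral_of_le hs.2]
  have hright : ∀ u ∈ Ioc (0:ℝ) τ, ∫ s in (0:ℝ)..u, f s u = ∫ s in Ioc 0 τ, g s u := by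
    intro u hu
    have : (fun s => g s u) = (Iic u).indicator (fun s => f s u) := by
      ext s; simp [g, indicator_apply]
    rw [this, setIntegral_indicator measurableSet_Iic, Ioc_inter_Iic, min_eq_right hu.2,
      integral_of_le hu.1.le]
  rw [integral_of_le hτ, integral_of_le hτ, setIntegral_congr_fun measurableSet_Ioc hleft,
    setIntegral_congr_fun measurableSet_Ioc hright]
  exact integral_integral_swap hg

noncomputable def volterraConv (p q : ℝ → ℝ) (τ : ℝ) : ℝ :=
  ∫ s in (0:ℝ)..τ, p s * q (τ - s)

section volterraConv

variable {p q : ℝ → ℝ}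

theorem Continuous.volterraConv (hp : Continuous p) (hq : Continuous q) :
    Continuous (volterraConv p q) :=
  continuous_parametric_intervalIntegral_of_continuous (f := fun τ s => p s * q (τ - s))
    (by fun_prop) continuous_id

theorem volterraConv_comp_max (q : ℝ → ℝ) {τ : ℝ} (hτ : 0 ≤ τ) :
    volterraConv (fun t => p (max 0 t)) q τ = volterraConv p q τ :=
  integral_congr fun s hs => by
    rw [uIcc_of_le hτ] at hs
    simp only [max_eq_right hs.1]

theorem volterraConv_sub (hp : Continuous p) {p' : ℝ → ℝ} (hp' : Continuous p') (hq : Continuous q)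
    (τ : ℝ) : volterraConv (p - p') q τ = volterraConv p q τ - volterraConv p' q τ := by
  simp only [volterraConv, Pi.sub_apply, sub_mul]
  exact integral_sub ((hp.mul (by fun_prop)).intervalIntegrable _ _)
    ((hp'.mul (by fun_prop)).intervalIntegrable _ _)

theorem abs_volterraConv_le (hp : Continuous p) (hq : Continuous q) {τ K : ℝ} (hτ : 0 ≤ τ)
    (hK : ∀ t ∈ Icc 0 τ, |q t| ≤ K) :
    |volterraConv p q τ| ≤ K * ∫ s in (0:ℝ)..τ, |p s| := by
  rw [← intervalIntegral.integral_const_mul]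
  refine (abs_integral_le_integral_abs hτ).trans <| integral_mono_on hτ
    (Continuous.intervalIntegrable (by fun_prop) _ _)
    (Continuous.intervalIntegrable (by fun_prop) _ _) fun s hs => ?_
  rw [abs_mul, mul_comm]
  exact mul_le_mul_of_nonneg_right (hK _ ⟨by linarith [hs.2], by linarith [hs.1]⟩) (abs_nonneg _)

theorem integral_volterraConv (hp : Continuous p) (hq : Continuous q) {τ : ℝ} (hτ : 0 ≤ τ) :
    ∫ u in (0:ℝ)..τ, volterraConv p q u = volterraConv p (fun t => ∫ v in (0:ℝ)..t, q v) τ := by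
  have hshift : ∀ s, ∫ v in (0:ℝ)..τ - s, q v = ∫ u in s..τ, q (u - s) := fun s => by
    rw [integral_comp_sub_right, sub_self]
  simp only [volterraConv, hshift, ← intervalIntegral.integral_const_mul]
  exact (integral_integral_triangle_swap (f := fun s u => p s * q (u - s)) (by fun_prop) hτ).symm

theorem volterraConv_const_mul (p q : ℝ → ℝ) (c τ : ℝ) :
    volterraConv p (fun t => c * q t) τ = c * volterraConv p q τ := by
  simp only [volterraConv, mul_left_comm _ c, intervalIntegral.integral_const_mul]

end volterraConv

section secondKind

variable {a κ : ℝ → ℝ}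

theorem eqOn_zero_of_eq_volterraConv {g : ℝ → ℝ} (hg : Continuous g) (hκ : Continuous κ)
    (h : ∀ τ ∈ Ici 0, g τ = volterraConv g κ τ) : EqOn g 0 (Ici 0) := by
  intro τ hτ
  obtain ⟨K, hK⟩ := isCompact_Icc.exists_bound_of_continuousOn (s := Icc 0 τ) hκ.continuousOn
  refine eqOn_zero_of_abs_le_mul_integral_abs hg (C := K) (fun t ht => ?_) ⟨hτ, le_rfl⟩
  rw [h t ht.1]
  exact abs_volterraConv_le hg hκ ht.1 fun s hs => by simpa using hK s ⟨hs.1, hs.2.trans ht.2⟩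

theorem eqOn_of_eq_add_volterraConv (hκ : Continuous κ) {θ₁ θ₂ : ℝ → ℝ} (hθ₁ : Continuous θ₁)
    (hθ₂ : Continuous θ₂) (h₁ : ∀ τ ∈ Ici 0, θ₁ τ = a τ + volterraConv θ₁ κ τ)
    (h₂ : ∀ τ ∈ Ici 0, θ₂ τ = a τ + volterraConv θ₂ κ τ) : EqOn θ₁ θ₂ (Ici 0) := by
  have h := eqOn_zero_of_eq_volterraConv (hθ₁.sub hθ₂) hκ fun τ hτ => by
    rw [volterraConv_sub hθ₁ hθ₂ hκ, Pi.sub_apply, h₁ τ hτ, h₂ τ hτ]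
    ring
  exact fun τ hτ => sub_eq_zero.1 (h hτ)

noncomputable def neumannTerm (a κ : ℝ → ℝ) : ℕ → ℝ → ℝ
  | 0 => a
  | n + 1 => volterraConv (neumannTerm a κ n) κ

theorem continuous_neumannTerm (ha : Continuous a) (hκ : Continuous κ) :
    ∀ n, Continuous (neumannTerm a κ n)
  | 0 => ha
  | n + 1 => (continuous_neumannTerm ha hκ n).volterraConv hκ

open Nat in
theorem abs_neumannTerm_le (ha : Continuous a) (hκ : Continuous κ) {T M K : ℝ} (hK0 : 0 ≤ K)
    (hM : ∀ t ∈ Icc 0 T, |a t| ≤ M) (hK : ∀ t ∈ Icc 0 T, |κ t| ≤ K) (n : ℕ) :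
    ∀ τ ∈ Icc 0 T, |neumannTerm a κ n τ| ≤ M * ((K * τ) ^ n / n !) := by
  induction n with
  | zero => simpa [neumannTerm] using hM
  | succ n ih =>
    intro τ hτ
    have hK' : ∀ t ∈ Icc 0 τ, |κ t| ≤ K := fun t ht => hK t ⟨ht.1, ht.2.trans hτ.2⟩
    calc |neumannTerm a κ (n + 1) τ|
        ≤ K * ∫ s in (0:ℝ)..τ, |neumannTerm a κ n s| :=
          abs_volterraConv_le (continuous_neumannTerm ha hκ n) hκ hτ.1 hK'
      _ ≤ K * ∫ s in (0:ℝ)..τ, (M * K ^ n / n !) * s ^ n := by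
          gcongr
          refine integral_mono_on hτ.1 ((continuous_neumannTerm ha hκ n).abs.intervalIntegrable _ _)
            (Continuous.intervalIntegrable (by fun_prop) _ _) fun s hs => ?_
          calc |neumannTerm a κ n s| ≤ M * ((K * s) ^ n / n !) :=
                ih s ⟨hs.1, hs.2.trans hτ.2⟩
            _ = (M * K ^ n / n !) * s ^ n := by ring
      _ = M * ((K * τ) ^ (n + 1) / (n + 1)!) := by
          rw [intervalIntegral.integral_const_mul, integral_pow, factorial_succ]
          push_cast
          field_simp
          ring

open Nat in
theorem exists_summable_bound_neumannTerm (ha : Continuous a) (hκ : Continuous κ) (T : ℝ) :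
    ∃ C : ℕ → ℝ, Summable C ∧ ∀ n, ∀ τ ∈ Icc 0 T, |neumannTerm a κ n τ| ≤ C n := by
  obtain ⟨M, hM⟩ := isCompact_Icc.exists_bound_of_continuousOn (s := Icc 0 T) ha.continuousOn
  obtain ⟨K, hK⟩ := isCompact_Icc.exists_bound_of_continuousOn (s := Icc 0 T) hκ.continuousOn
  have hM' : ∀ t ∈ Icc 0 T, |a t| ≤ max M 0 := fun t ht =>
    (Real.norm_eq_abs _ ▸ hM t ht).trans (le_max_left _ _)
  have hK' : ∀ t ∈ Icc 0 T, |κ t| ≤ max K 0 := fun t ht =>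
    (Real.norm_eq_abs _ ▸ hK t ht).trans (le_max_left _ _)
  refine ⟨fun n => max M 0 * ((max K 0 * T) ^ n / n !),
    (Real.summable_pow_div_factorial _).mul_left _, fun n τ hτ => ?_⟩
  refine (abs_neumannTerm_le ha hκ (le_max_right K 0) hM' hK' n τ hτ).trans ?_
  obtain ⟨hτ0, hτT⟩ := hτ
  dsimp only
  gcongr

theorem summable_neumannTerm (ha : Continuous a) (hκ : Continuous κ) {τ : ℝ} (hτ : 0 ≤ τ) :
    Summable fun n => neumannTerm a κ n τ := by
  obtain ⟨C, hC, hbound⟩ := exists_summable_bound_neumannTerm ha hκ τ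
  exact hC.of_norm_bounded fun n => hbound n τ ⟨hτ, le_rfl⟩

theorem continuousOn_tsum_neumannTerm (ha : Continuous a) (hκ : Continuous κ) :
    ContinuousOn (fun τ => ∑' n, neumannTerm a κ n τ) (Ici 0) := by
  intro τ hτ
  obtain ⟨C, hC, hbound⟩ := exists_summable_bound_neumannTerm ha hκ (τ + 1)
  have hcont : ContinuousOn (fun τ => ∑' n, neumannTerm a κ n τ) (Icc 0 (τ + 1)) :=
    continuousOn_tsum (fun n => (continuous_neumannTerm ha hκ n).continuousOn) hC hbound
  refine (hcont τ ⟨hτ, by linarith⟩).mono_of_mem_nhdsWithin ?_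
  exact Filter.mem_of_superset (inter_mem_nhdsWithin _ (Iio_mem_nhds (lt_add_one τ)))
    fun t ht => ⟨ht.1, ht.2.le⟩

theorem tsum_neumannTerm_eq (ha : Continuous a) (hκ : Continuous κ) {τ : ℝ} (hτ : 0 ≤ τ) :
    ∑' n, neumannTerm a κ n τ = a τ + volterraConv (fun t => ∑' n, neumannTerm a κ n t) κ τ := by
  obtain ⟨C, hC, hbound⟩ := exists_summable_bound_neumannTerm ha hκ τ
  obtain ⟨K, hK⟩ := isCompact_Icc.exists_bound_of_continuousOn (s := Icc 0 τ) hκ.continuousOn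
  have hsum : HasSum (fun n => neumannTerm a κ (n + 1) τ)
      (volterraConv (fun t => ∑' n, neumannTerm a κ n t) κ τ) := by
    refine intervalIntegral.hasSum_integral_of_dominated_convergence (fun n _ => C n * K)
      (fun n => ((continuous_neumannTerm ha hκ n).mul (by fun_prop)).aestronglyMeasurable)
      (fun n => ae_of_all _ fun s hs => ?_) (ae_of_all _ fun _ _ => hC.mul_right K)
      intervalIntegrable_const (ae_of_all _ fun s hs => ?_)
    · rw [uIoc_of_le hτ] at hs
      rw [norm_mul]
      exact mul_le_mul (hbound n s ⟨hs.1.le, hs.2⟩) (hK _ ⟨by linarith [hs.2], by linarith [hs.1]⟩)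
        (norm_nonneg _) ((abs_nonneg _).trans (hbound n s ⟨hs.1.le, hs.2⟩))
    · rw [uIoc_of_le hτ] at hs
      exact (summable_neumannTerm ha hκ hs.1.le).hasSum.mul_right _
  rw [(summable_neumannTerm ha hκ hτ).tsum_eq_zero_add, hsum.tsum_eq]
  rfl

theorem exists_eq_add_volterraConv (ha : Continuous a) (hκ : Continuous κ) :
    ∃ θ : ℝ → ℝ, Continuous θ ∧ ∀ τ ∈ Ici 0, θ τ = a τ + volterraConv θ κ τ := by
  set θ : ℝ → ℝ := fun τ => ∑' n, neumannTerm a κ n τ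
  refine ⟨fun t => θ (max 0 t), (continuousOn_tsum_neumannTerm ha hκ).comp_max_continuous,
    fun τ hτ => ?_⟩
  show θ (max 0 τ) = _
  rw [volterraConv_comp_max κ hτ, max_eq_right hτ]
  exact tsum_neumannTerm_eq ha hκ hτ

end secondKind

section firstKind

variable {θ k K : ℝ → ℝ}

theorem volterraConv_eq_integral (hθ : Continuous θ) (hK : Continuous K)
    (hk : ∀ t ∈ Ici (0:ℝ), k t = k 0 + ∫ v in (0:ℝ)..t, K v) {τ : ℝ} (hτ : 0 ≤ τ) :
    volterraConv θ k τ = ∫ u in (0:ℝ)..τ, (k 0 * θ u + volterraConv θ K u) := by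
  have hprim : Continuous fun s => ∫ v in (0:ℝ)..τ - s, K v :=
    (continuous_primitive (hK.intervalIntegrable) 0).comp (continuous_const.sub continuous_id)
  calc volterraConv θ k τ
      = ∫ s in (0:ℝ)..τ, (k 0 * θ s + θ s * ∫ v in (0:ℝ)..τ - s, K v) :=
        integral_congr fun s hs => by
          rw [uIcc_of_le hτ] at hs
          simp only [hk (τ - s) (sub_nonneg.2 hs.2)]
          ring
    _ = k 0 * (∫ s in (0:ℝ)..τ, θ s) + ∫ u in (0:ℝ)..τ, volterraConv θ K u := by
        have hint : IntervalIntegrable (fun s => θ s * ∫ v in (0:ℝ)..τ - s, K v) volume 0 τ :=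
          (hθ.mul hprim).intervalIntegrable _ _
        rw [integral_add ((hθ.const_mul _).intervalIntegrable _ _) hint,
          intervalIntegral.integral_const_mul, integral_volterraConv hθ hK hτ]
        rfl
    _ = ∫ u in (0:ℝ)..τ, (k 0 * θ u + volterraConv θ K u) := by
        rw [integral_add (((hθ.const_mul _).intervalIntegrable _ _))
          ((hθ.volterraConv hK).intervalIntegrable _ _), intervalIntegral.integral_const_mul]

theorem volterraConv_eq_iff {F G : ℝ → ℝ} (hθ : Continuous θ) (hK : Continuous K)
    (hG : Continuous G) (hk : ∀ t ∈ Ici (0:ℝ), k t = k 0 + ∫ v in (0:ℝ)..t, K v)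
    (hF : ∀ t ∈ Ici (0:ℝ), F t = ∫ v in (0:ℝ)..t, G v) :
    (∀ τ ∈ Ici 0, volterraConv θ k τ = F τ) ↔
      ∀ τ ∈ Ici 0, k 0 * θ τ + volterraConv θ K τ = G τ := by
  constructor
  · intro h τ hτ
    have hcont : Continuous fun u => k 0 * θ u + volterraConv θ K u :=
      (hθ.const_mul _).add (hθ.volterraConv hK)
    refine sub_eq_zero.1 (eqOn_zero_of_integral_eq_zero (hcont.sub hG) (fun τ hτ => ?_) hτ)
    rw [Pi.sub_def, integral_sub (hcont.intervalIntegrable _ _) (hG.intervalIntegrable _ _),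
      ← volterraConv_eq_integral hθ hK hk hτ, ← hF τ hτ, h τ hτ, sub_self]
  · intro h τ hτ
    rw [volterraConv_eq_integral hθ hK hk hτ, hF τ hτ]
    exact integral_congr fun u hu => by
      rw [uIcc_of_le hτ] at hu
      exact h u hu.1

end firstKind

theorem existsUnique_volterraConv_eq {k k' F F' : ℝ → ℝ}
    (hk : ∀ t ∈ Ici (0:ℝ), HasDerivWithinAt k (k' t) (Ici 0) t) (hk' : ContinuousOn k' (Ici 0))
    (hk0 : k 0 ≠ 0) (hF : ∀ t ∈ Ici (0:ℝ), HasDerivWithinAt F (F' t) (Ici 0) t)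
    (hF' : ContinuousOn F' (Ici 0)) (hF0 : F 0 = 0) :
    ∃ θ : ℝ → ℝ, ContinuousOn θ (Ici 0) ∧ (∀ τ ∈ Ici 0, volterraConv θ k τ = F τ) ∧
      ∀ θ' : ℝ → ℝ, ContinuousOn θ' (Ici 0) → (∀ τ ∈ Ici 0, volterraConv θ' k τ = F τ) →
        EqOn θ θ' (Ici 0) := by
  set K : ℝ → ℝ := fun t => k' (max 0 t)
  set G : ℝ → ℝ := fun t => F' (max 0 t)
  have hK : Continuous K := hk'.comp_max_continuous
  have hG : Continuous G := hF'.comp_max_continuous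
  set κ : ℝ → ℝ := fun t => -(k 0)⁻¹ * K t
  have hκ : Continuous κ := hK.const_mul _
  have hiff : ∀ θ, Continuous θ → ((∀ τ ∈ Ici 0, volterraConv θ k τ = F τ) ↔
      ∀ τ ∈ Ici 0, θ τ = G τ / k 0 + volterraConv θ κ τ) := fun θ hθ =>
    (volterraConv_eq_iff hθ hK hG (fun t ht => eq_add_integral_of_hasDerivWithinAt_Ici hk hk' ht)
      fun t ht => by rw [eq_add_integral_of_hasDerivWithinAt_Ici hF hF' ht, hF0, zero_add]).trans
    <| forall₂_congr fun τ _ => by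
      rw [volterraConv_const_mul]
      field_simp
      constructor <;> intro <;> linarith
  obtain ⟨θ, hθ, hθeq⟩ := exists_eq_add_volterraConv (hG.div_const (k 0)) hκ
  refine ⟨θ, hθ.continuousOn, (hiff θ hθ).2 hθeq, fun θ' hθ' hθ'eq τ hτ => ?_⟩
  have hθ'' : Continuous fun t => θ' (max 0 t) := hθ'.comp_max_continuous
  have := eqOn_of_eq_add_volterraConv hκ hθ hθ'' hθeq <| (hiff _ hθ'').1 fun τ hτ => by
    rw [volterraConv_comp_max k hτ]
    exact hθ'eq τ hτ
  simpa [max_eq_right (mem_Ici.1 hτ)] using this hτ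

theorem stmt_5_general (d : ℕ) (ℓ : ℝ) (l : Fin d → ℝ)
    (e₁ : Fin d → ℝ)
    (hle₁ : l ⬝ᵥ e₁ ≠ 0)
    (Φ' Φ'' : ℝ → ℝ) (Ψ' Ψ'' : ℝ → Fin d → ℝ)
    (hΦ'' : ∀ τ ∈ Ici (0 : ℝ), HasDerivWithinAt Φ' (Φ'' τ) (Ici 0) τ)
    (hΦ''c : ContinuousOn Φ'' (Ici 0))
    (hΨ'' : ∀ τ ∈ Ici (0 : ℝ), HasDerivWithinAt Ψ' (Ψ'' τ) (Ici 0) τ)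
    (hΨ''c : ContinuousOn Ψ'' (Ici 0))
    (hΦ'0 : Φ' 0 = 0) (hΨ'0 : Ψ' 0 = -l)
    (x : Fin d → ℝ) (h h' : ℝ → ℝ)
    (hh' : ∀ τ ∈ Ici (0 : ℝ), HasDerivWithinAt h (h' τ) (Ici 0) τ)
    (hh'c : ContinuousOn h' (Ici 0))
    (hh0 : h 0 = ℓ + l ⬝ᵥ x) :
    ∃ θ : ℝ → ℝ, ContinuousOn θ (Ici 0) ∧
      (∀ τ ∈ Ici (0 : ℝ),
        h τ = ℓ - (∫ s in (0 : ℝ)..τ, θ s * (Ψ' (τ - s) ⬝ᵥ e₁)) - Φ' τ - Ψ' τ ⬝ᵥ x) ∧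
      ∀ θ' : ℝ → ℝ, ContinuousOn θ' (Ici 0) →
        (∀ τ ∈ Ici (0 : ℝ),
          h τ = ℓ - (∫ s in (0 : ℝ)..τ, θ' s * (Ψ' (τ - s) ⬝ᵥ e₁)) - Φ' τ - Ψ' τ ⬝ᵥ x) →
        EqOn θ θ' (Ici 0) := by
  have hdot : ∀ v : Fin d → ℝ, ContinuousOn (fun t => Ψ'' t ⬝ᵥ v) (Ici 0) := fun v =>
    (continuous_id.dotProduct continuous_const).comp_continuousOn hΨ''c
  have hF : ∀ τ ∈ Ici (0:ℝ), HasDerivWithinAt (fun t => ℓ - h t - Φ' t - Ψ' t ⬝ᵥ x)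
      (-h' τ - Φ'' τ - Ψ'' τ ⬝ᵥ x) (Ici 0) τ := fun τ hτ =>
    ((((hh' τ hτ).const_sub ℓ).sub (hΦ'' τ hτ)).sub ((hΨ'' τ hτ).dotProduct_const x))
  obtain ⟨θ, hθ, hsol, huniq⟩ := existsUnique_volterraConv_eq
    (F := fun t => ℓ - h t - Φ' t - Ψ' t ⬝ᵥ x) (F' := fun t => -h' t - Φ'' t - Ψ'' t ⬝ᵥ x)
    (fun τ hτ => (hΨ'' τ hτ).dotProduct_const e₁) (hdot e₁)
    (by simpa [hΨ'0] using hle₁) hF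
    (((hh'c.neg).sub hΦ''c).sub (hdot x)) (by simp [hh0, hΦ'0, hΨ'0])
  have hiff : ∀ θ τ, volterraConv θ (fun t => Ψ' t ⬝ᵥ e₁) τ = ℓ - h τ - Φ' τ - Ψ' τ ⬝ᵥ x ↔
      h τ = ℓ - (∫ s in (0 : ℝ)..τ, θ s * (Ψ' (τ - s) ⬝ᵥ e₁)) - Φ' τ - Ψ' τ ⬝ᵥ x := fun θ τ => by
    unfold volterraConv
    constructor <;> intro <;> linarith
  exact ⟨θ, hθ, fun τ hτ => (hiff θ τ).1 (hsol τ hτ),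
    fun θ' hθ' h' => huniq θ' hθ' fun τ hτ => (hiff θ' τ).2 (h' τ hτ)⟩

/-- Calibration of Hull–White extensions to initial forward rate curves.
Given Riccati-type data (Φ, Ψ) with Φ'(0) = 0, Ψ'(0) = −λ, ⟨λ, e₁⟩ ≠ 0, and a C¹ curve h
with h(0) = ℓ + ⟨λ, x⟩, the Volterra integral equation
h(τ) = ℓ − ∫₀^τ θ(s)⟨Ψ'(τ−s), e₁⟩ ds − Φ'(τ) − ⟨Ψ'(τ), x⟩
has a unique continuous solution θ. -/
theorem stmt_5 (d : ℕ) (hd : 1 ≤ d) (ℓ : ℝ) (l : Fin d → ℝ)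
    (e₁ : Fin d → ℝ) (he₁ : e₁ = fun j : Fin d => if (j : ℕ) = 0 then (1 : ℝ) else 0)
    (hle₁ : l ⬝ᵥ e₁ ≠ 0)
    (Φ Φ' Φ'' : ℝ → ℝ) (Ψ Ψ' Ψ'' : ℝ → Fin d → ℝ)
    (hΦ' : ∀ τ ∈ Ici (0 : ℝ), HasDerivWithinAt Φ (Φ' τ) (Ici 0) τ)
    (hΦ'' : ∀ τ ∈ Ici (0 : ℝ), HasDerivWithinAt Φ' (Φ'' τ) (Ici 0) τ)
    (hΦ''c : ContinuousOn Φ'' (Ici 0))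
    (hΨ' : ∀ τ ∈ Ici (0 : ℝ), HasDerivWithinAt Ψ (Ψ' τ) (Ici 0) τ)
    (hΨ'' : ∀ τ ∈ Ici (0 : ℝ), HasDerivWithinAt Ψ' (Ψ'' τ) (Ici 0) τ)
    (hΨ''c : ContinuousOn Ψ'' (Ici 0))
    (hΦ'0 : Φ' 0 = 0) (hΨ'0 : Ψ' 0 = -l)
    (x : Fin d → ℝ) (h h' : ℝ → ℝ)
    (hh' : ∀ τ ∈ Ici (0 : ℝ), HasDerivWithinAt h (h' τ) (Ici 0) τ)
    (hh'c : ContinuousOn h' (Ici 0))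
    (hh0 : h 0 = ℓ + l ⬝ᵥ x) :
    ∃ θ : ℝ → ℝ, ContinuousOn θ (Ici 0) ∧
      (∀ τ ∈ Ici (0 : ℝ),
        h τ = ℓ - (∫ s in (0 : ℝ)..τ, θ s * (Ψ' (τ - s) ⬝ᵥ e₁)) - Φ' τ - Ψ' τ ⬝ᵥ x) ∧
      ∀ θ' : ℝ → ℝ, ContinuousOn θ' (Ici 0) →
        (∀ τ ∈ Ici (0 : ℝ),
          h τ = ℓ - (∫ s in (0 : ℝ)..τ, θ' s * (Ψ' (τ - s) ⬝ᵥ e₁)) - Φ' τ - Ψ' τ ⬝ᵥ x) →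
        EqOn θ θ' (Ici 0) :=
  stmt_5_general d ℓ l e₁ hle₁ Φ' Φ'' Ψ' Ψ'' hΦ'' hΦ''c hΨ'' hΨ''c hΦ'0 hΨ'0 x h h' hh' hh'c hh0
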